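/- Let P be a definite program and Q a query, and let Q' be Q generalized for P, i.e., Q' is obtained from Q by replacing each maximal occurrence of an alien term (with respect to the function symbols of P) by a fresh variable, with equal alien terms replaced by the same variable. Then P ⊨ Q if and only if P ⊨ Q'. -/

import Mathlib

/-- First-order terms over function symbols `F` (each use records the number of
arguments), with variables indexed by `ℕ`. -/
inductive Tm (F : Type) : Type
  | var : ℕ → Tm F
  | app : F → (k : ℕ) → (Fin k → Tm F) → Tm F

namespace Tm

/-- Apply a substitution to a term. -/
def subst (σ : ℕ → Tm F) : Tm F → Tm F
  | var n => σ n
  | app f k ts => app f k (fun i => (ts i).subst σ)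

/-- Variables occurring in a term. -/
def vars : Tm F → Set ℕ
  | var n => {n}
  | app _ _ ts => ⋃ i, (ts i).vars

/-- Function symbols occurring in a term. -/
def symbols : Tm F → Set F
  | var _ => ∅
  | app f _ ts => {f} ∪ ⋃ i, (ts i).symbols

/-- Subterms of a term (including the term itself). -/
def subterms : Tm F → Set (Tm F)
  | var n => {var n}
  | app f k ts => {app f k ts} ∪ ⋃ i, (ts i).subterms

/-- The head (outermost) function symbol, if any. -/
def head? : Tm F → Option F
  | var _ => none
  | app f _ _ => some f

def IsVar : Tm F → Prop
  | var _ => True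
  | app _ _ _ => False

def isGround (t : Tm F) : Prop := t.vars = ∅

/-- Well-formedness w.r.t. an arity assignment: every function symbol is used
with exactly its arity. -/
def WF (ar : F → ℕ) : Tm F → Prop
  | var _ => True
  | app f k ts => k = ar f ∧ ∀ i, (ts i).WF ar

end Tm

/-- A term is an alien w.r.t. a set `S` of function symbols if it is a
non-variable term whose head symbol is not in `S`. -/
def IsAlien (S : Set F) (t : Tm F) : Prop :=
  ∃ f, t.head? = some f ∧ f ∉ S

/-- The substitution `{X/u}`. -/
def sub1 (X : ℕ) (u : Tm F) : ℕ → Tm F := fun n => if n = X then u else .var n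

/-- `σ` is the substitution `{V 0/t 0, …, V (k-1)/t (k-1)}`. -/
def FiniteSub (σ : ℕ → Tm F) (V : Fin k → ℕ) (t : Fin k → Tm F) : Prop :=
  (∀ i, σ (V i) = t i) ∧ ∀ n, (∀ i, V i ≠ n) → σ n = Tm.var n

/-- An atom: a predicate symbol applied to a list of terms. -/
structure Atom (F Pr : Type) where
  pred : Pr
  args : List (Tm F)

namespace Atom
def subst (σ : ℕ → Tm F) (A : Atom F Pr) : Atom F Pr := ⟨A.pred, A.args.map (Tm.subst σ)⟩
def vars (A : Atom F Pr) : Set ℕ := { n | ∃ t ∈ A.args, n ∈ t.vars }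
def symbols (A : Atom F Pr) : Set F := { f | ∃ t ∈ A.args, f ∈ t.symbols }
def isGround (A : Atom F Pr) : Prop := A.vars = ∅
def WFA (ar : F → ℕ) (A : Atom F Pr) : Prop := ∀ t ∈ A.args, t.WF ar
end Atom

/-- A definite clause `head ← body`. -/
structure Clause (F Pr : Type) where
  head : Atom F Pr
  body : List (Atom F Pr)

/-- A definite program: a set of definite clauses. -/
abbrev Program (F Pr : Type) := Set (Clause F Pr)

/-- A query: a conjunction (list) of atoms. -/
abbrev Query (F Pr : Type) := List (Atom F Pr)

def Clause.subst (σ : ℕ → Tm F) (C : Clause F Pr) : Clause F Pr :=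
  ⟨C.head.subst σ, C.body.map (Atom.subst σ)⟩

def Clause.symbols (C : Clause F Pr) : Set F :=
  C.head.symbols ∪ { f | ∃ A ∈ C.body, f ∈ A.symbols }

def Clause.vars (C : Clause F Pr) : Set ℕ :=
  C.head.vars ∪ { n | ∃ A ∈ C.body, n ∈ A.vars }

def Clause.WFC (ar : F → ℕ) (C : Clause F Pr) : Prop :=
  C.head.WFA ar ∧ ∀ A ∈ C.body, A.WFA ar

def progSymbols (Pg : Program F Pr) : Set F := { f | ∃ C ∈ Pg, f ∈ C.symbols }

def ProgramWF (ar : F → ℕ) (Pg : Program F Pr) : Prop := ∀ C ∈ Pg, C.WFC ar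

def querySymbols (Q : Query F Pr) : Set F := { f | ∃ A ∈ Q, f ∈ A.symbols }

def queryVars (Q : Query F Pr) : Set ℕ := { n | ∃ A ∈ Q, n ∈ A.vars }

def QueryWF (ar : F → ℕ) (Q : Query F Pr) : Prop := ∀ A ∈ Q, A.WFA ar

def substQuery (σ : ℕ → Tm F) (Q : Query F Pr) : Query F Pr := Q.map (Atom.subst σ)

/-- A first-order interpretation (for a language without equality). -/
structure Interp (F Pr : Type) where
  dom : Type
  nonempty : Nonempty dom
  fn : F → (k : ℕ) → (Fin k → dom) → dom
  rel : Pr → List dom → Prop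

namespace Interp

def eval (I : Interp F Pr) (ρ : ℕ → I.dom) : Tm F → I.dom
  | .var n => ρ n
  | .app f k ts => I.fn f k (fun i => I.eval ρ (ts i))

def holdsAtom (I : Interp F Pr) (ρ : ℕ → I.dom) (A : Atom F Pr) : Prop :=
  I.rel A.pred (A.args.map (I.eval ρ))

def holdsClause (I : Interp F Pr) (C : Clause F Pr) : Prop :=
  ∀ ρ, (∀ B ∈ C.body, I.holdsAtom ρ B) → I.holdsAtom ρ C.head

def isModel (I : Interp F Pr) (Pg : Program F Pr) : Prop := ∀ C ∈ Pg, I.holdsClause C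

end Interp

/-- `P ⊨ Q`: logical consequence of the universal closure of the query. -/
def Entails (Pg : Program F Pr) (Q : Query F Pr) : Prop :=
  ∀ I : Interp F Pr, I.isModel Pg → ∀ ρ, ∀ A ∈ Q, I.holdsAtom ρ A

/-- A substitution mapping every variable to a ground term. -/
def GroundSub (σ : ℕ → Tm F) : Prop := ∀ n, (σ n).isGround

/-- A grounding substitution by well-formed ground terms
(terms of the Herbrand universe for arities `ar`). -/
def WFGroundSub (ar : F → ℕ) (σ : ℕ → Tm F) : Prop :=
  ∀ n, (σ n).isGround ∧ (σ n).WF ar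

/-- A Herbrand interpretation (set of ground atoms) that is a model of `Pg`. -/
def IsHerbrandModel (Pg : Program F Pr) (S : Set (Atom F Pr)) : Prop :=
  ∀ C ∈ Pg, ∀ σ : ℕ → Tm F, GroundSub σ →
    (∀ B ∈ C.body, B.subst σ ∈ S) → C.head.subst σ ∈ S

/-- The least Herbrand model `M_P`. -/
def leastHerbrand (Pg : Program F Pr) : Set (Atom F Pr) :=
  ⋂₀ { S | IsHerbrandModel Pg S }

/-- `M_P ⊨ Q`: every ground instance of `Q` is true in the least Herbrand model. -/
def HoldsInM (Pg : Program F Pr) (Q : Query F Pr) : Prop :=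
  ∀ σ : ℕ → Tm F, GroundSub σ → ∀ A ∈ Q, A.subst σ ∈ leastHerbrand Pg

/-- A Herbrand model over the Herbrand universe of well-formed ground terms. -/
def IsHerbrandModelWF (ar : F → ℕ) (Pg : Program F Pr) (S : Set (Atom F Pr)) : Prop :=
  ∀ C ∈ Pg, ∀ σ : ℕ → Tm F, WFGroundSub ar σ →
    (∀ B ∈ C.body, B.subst σ ∈ S) → C.head.subst σ ∈ S

/-- The least Herbrand model `M_P` (over well-formed ground terms). -/
def leastHerbrandWF (ar : F → ℕ) (Pg : Program F Pr) : Set (Atom F Pr) :=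
  ⋂₀ { S | IsHerbrandModelWF ar Pg S }

/-- `M_P ⊨ Q`, where ground instances are taken over the Herbrand universe of
well-formed ground terms. -/
def HoldsInMWF (ar : F → ℕ) (Pg : Program F Pr) (Q : Query F Pr) : Prop :=
  ∀ σ : ℕ → Tm F, WFGroundSub ar σ → ∀ A ∈ Q, A.subst σ ∈ leastHerbrandWF ar Pg

/-- The query contains no aliens w.r.t. `S` (no subterm of it is an alien). -/
def QueryNoAliens (S : Set F) (Q : Query F Pr) : Prop :=
  ∀ A ∈ Q, ∀ t ∈ A.args, ∀ s ∈ t.subterms, ¬ IsAlien S s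

/-- `Q'` is `Q` generalized for `S`: `Q'` contains no aliens w.r.t. `S` and `Q` is
obtained from `Q'` by a substitution (with domain among the variables of `Q'`)
mapping distinct variables to pairwise distinct aliens w.r.t. `S`. -/
def IsGenQuery (S : Set F) (Q' Q : Query F Pr) : Prop :=
  QueryNoAliens S Q' ∧
  ∃ (k : ℕ) (V : Fin k → ℕ) (t : Fin k → Tm F) (σ : ℕ → Tm F),
    Function.Injective V ∧ Function.Injective t ∧ (∀ i, IsAlien S (t i)) ∧
    FiniteSub σ V t ∧ (∀ i, V i ∈ queryVars Q') ∧ Q = substQuery σ Q'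

section Aux

variable {F Pr : Type}

theorem eval_subst (I : Interp F Pr) (ρ : ℕ → I.dom) (σ : ℕ → Tm F) :
    ∀ t : Tm F, I.eval ρ (t.subst σ) = I.eval (fun n => I.eval ρ (σ n)) t
  | .var n => rfl
  | .app f k ts => by
      simp only [Tm.subst, Interp.eval]
      congr 1; funext i; exact eval_subst I ρ σ (ts i)

theorem subst_var : ∀ t : Tm F, t.subst (Tm.var : ℕ → Tm F) = t
  | .var n => rfl
  | .app f k ts => by
      simp only [Tm.subst]; congr 1; funext i; exact subst_var (ts i)

open Classical in
noncomputable def hmap (I : Interp F Pr) (ρ : ℕ → I.dom)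
    {k : ℕ} (V : Fin k → ℕ) (t : Fin k → Tm F) : Tm F → I.dom
  | .var n => ρ n
  | .app f m ts =>
      if h : ∃ i, t i = .app f m ts then ρ (V (Classical.choose h))
      else I.fn f m (fun i => hmap I ρ V t (ts i))

/-- for terms whose symbols are all in `S`, `hmap` after substitution behaves
like evaluation under the composed valuation, provided all aliens' heads are
outside `S`. -/
theorem hmap_subst_prog (I : Interp F Pr) (ρ : ℕ → I.dom)
    {k : ℕ} (V : Fin k → ℕ) (t : Fin k → Tm F) (S : Set F)
    (halien : ∀ i, IsAlien S (t i)) (ρ' : ℕ → Tm F) :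
    ∀ u : Tm F, u.symbols ⊆ S →
      hmap I ρ V t (u.subst ρ') = I.eval (fun n => hmap I ρ V t (ρ' n)) u
  | .var n, _ => rfl
  | .app f m ts, hs => by
      have hfS : f ∈ S := hs (by simp [Tm.symbols])
      have hne : ¬ ∃ i, t i = Tm.app f m (fun j => (ts j).subst ρ') := by
        rintro ⟨i, hi⟩
        obtain ⟨g, hg, hgS⟩ := halien i
        rw [hi] at hg
        simp only [Tm.head?] at hg
        cases Option.some_inj.mp hg
        exact hgS hfS
      simp only [Tm.subst, hmap, dif_neg hne, Interp.eval]
      congr 1; funext i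
      refine hmap_subst_prog I ρ V t S halien ρ' (ts i) (fun g hgm => hs ?_)
      simp only [Tm.symbols, Set.mem_union, Set.mem_iUnion]
      exact Or.inr ⟨i, hgm⟩

theorem hmap_sigma (I : Interp F Pr) (ρ : ℕ → I.dom)
    {k : ℕ} (V : Fin k → ℕ) (t : Fin k → Tm F) (S : Set F) (σ : ℕ → Tm F)
    (hV : Function.Injective V) (ht : Function.Injective t)
    (halien : ∀ i, IsAlien S (t i)) (hfs : FiniteSub σ V t) (n : ℕ) :
    hmap I ρ V t (σ n) = ρ n := by
  by_cases hn : ∃ i, V i = n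
  · obtain ⟨i, hi⟩ := hn
    have hσ : σ n = t i := by rw [← hi, hfs.1 i]
    obtain ⟨g, hg, _⟩ := halien i
    cases hti : t i with
    | var m => rw [hti] at hg; simp [Tm.head?] at hg
    | app f m ts =>
        have hex : ∃ j, t j = Tm.app f m ts := ⟨i, hti⟩
        have hch : Classical.choose hex = i := ht (by rw [Classical.choose_spec hex, hti])
        rw [hσ, hti]
        simp only [hmap, dif_pos hex, hch, hi]
  · push_neg at hn
    rw [hfs.2 n hn]
    rfl

/-- for alien-free terms, `hmap` after the generalizing substitution is just
evaluation under `ρ`. -/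
theorem hmap_subst_noalien (I : Interp F Pr) (ρ : ℕ → I.dom)
    {k : ℕ} (V : Fin k → ℕ) (t : Fin k → Tm F) (S : Set F) (σ : ℕ → Tm F)
    (hV : Function.Injective V) (ht : Function.Injective t)
    (halien : ∀ i, IsAlien S (t i)) (hfs : FiniteSub σ V t) :
    ∀ u : Tm F, (∀ s ∈ u.subterms, ¬ IsAlien S s) →
      hmap I ρ V t (u.subst σ) = I.eval ρ u
  | .var n, _ => hmap_sigma I ρ V t S σ hV ht halien hfs n
  | .app f m ts, hs => by
      have hself : ¬ IsAlien S (Tm.app f m ts) :=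
        hs _ (by simp [Tm.subterms])
      have hfS : f ∈ S := by
        by_contra hfS
        exact hself ⟨f, rfl, hfS⟩
      have hne : ¬ ∃ i, t i = Tm.app f m (fun j => (ts j).subst σ) := by
        rintro ⟨i, hi⟩
        obtain ⟨g, hg, hgS⟩ := halien i
        rw [hi] at hg
        simp only [Tm.head?] at hg
        cases Option.some_inj.mp hg
        exact hgS hfS
      simp only [Tm.subst, hmap, dif_neg hne, Interp.eval]
      congr 1; funext i
      refine hmap_subst_noalien I ρ V t S σ hV ht halien hfs (ts i) (fun s hsm => hs s ?_)
      simp only [Tm.subterms, Set.mem_union, Set.mem_iUnion]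
      exact Or.inr ⟨i, hsm⟩

theorem J_eval (I : Interp F Pr) (ρ : ℕ → I.dom)
    {k : ℕ} (V : Fin k → ℕ) (t : Fin k → Tm F) :
    ∀ (ρ' : ℕ → Tm F) (u : Tm F),
      (Interp.mk (Tm F) ⟨Tm.var 0⟩ Tm.app
        (fun p l => I.rel p (l.map (hmap I ρ V t)))).eval ρ' u = u.subst ρ'
  | _, .var n => rfl
  | ρ', .app f m ts => by
      simp only [Interp.eval, Tm.subst]
      congr 1; funext i; exact J_eval I ρ V t ρ' (ts i)

end Aux


section Aux2

variable {F Pr : Type}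

noncomputable def Jint (I : Interp F Pr) (ρ : ℕ → I.dom)
    {k : ℕ} (V : Fin k → ℕ) (t : Fin k → Tm F) : Interp F Pr :=
  Interp.mk (Tm F) ⟨Tm.var 0⟩ Tm.app (fun p l => I.rel p (l.map (hmap I ρ V t)))

theorem Jint_eval (I : Interp F Pr) (ρ : ℕ → I.dom)
    {k : ℕ} (V : Fin k → ℕ) (t : Fin k → Tm F) (ρ' : ℕ → Tm F) (u : Tm F) :
    (Jint I ρ V t).eval ρ' u = u.subst ρ' := J_eval I ρ V t ρ' u

theorem Jint_holdsAtom (I : Interp F Pr) (ρ : ℕ → I.dom)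
    {k : ℕ} (V : Fin k → ℕ) (t : Fin k → Tm F) (S : Set F)
    (halien : ∀ i, IsAlien S (t i)) (A : Atom F Pr)
    (hAs : ∀ u ∈ A.args, u.symbols ⊆ S) (ρ' : ℕ → Tm F) :
    (Jint I ρ V t).holdsAtom ρ' A ↔
      I.holdsAtom (fun n => hmap I ρ V t (ρ' n)) A := by
  show I.rel A.pred ((A.args.map ((Jint I ρ V t).eval ρ')).map (hmap I ρ V t)) ↔
    I.rel A.pred (A.args.map (I.eval (fun n => hmap I ρ V t (ρ' n))))
  erw [List.map_map]
  have heq : A.args.map (hmap I ρ V t ∘ (Jint I ρ V t).eval ρ') =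
      A.args.map (I.eval (fun n => hmap I ρ V t (ρ' n))) := by
    apply List.map_congr_left
    intro u hu
    show hmap I ρ V t ((Jint I ρ V t).eval ρ' u) = _
    erw [Jint_eval]
    exact hmap_subst_prog I ρ V t S halien ρ' u (hAs u hu)
  rw [heq]

theorem Jint_model (I : Interp F Pr) (ρ : ℕ → I.dom)
    {k : ℕ} (V : Fin k → ℕ) (t : Fin k → Tm F) (Pg : Program F Pr)
    (halien : ∀ i, IsAlien (progSymbols Pg) (t i)) (hI : I.isModel Pg) :
    (Jint I ρ V t).isModel Pg := by
  intro C hC ρ' hbody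
  have hhead : ∀ u ∈ C.head.args, u.symbols ⊆ progSymbols Pg := by
    intro u hu f hf
    exact ⟨C, hC, Or.inl ⟨u, hu, hf⟩⟩
  have hbodys : ∀ B ∈ C.body, ∀ u ∈ B.args, u.symbols ⊆ progSymbols Pg := by
    intro B hB u hu f hf
    exact ⟨C, hC, Or.inr ⟨B, hB, u, hu, hf⟩⟩
  rw [Jint_holdsAtom I ρ V t (progSymbols Pg) halien C.head hhead ρ']
  apply hI C hC
  intro B hB
  rw [← Jint_holdsAtom I ρ V t (progSymbols Pg) halien B (hbodys B hB) ρ']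
  exact hbody B hB

end Aux2

/-- if `Q'` is `Q` generalized for (the function symbols of) `P`,
then `P ⊨ Q` iff `P ⊨ Q'`. -/
theorem stmt_5 {F Pr : Type} (Pg : Program F Pr) (Q Q' : Query F Pr)
    (hgen : IsGenQuery (progSymbols Pg) Q' Q) :
    Entails Pg Q ↔ Entails Pg Q' := by
  obtain ⟨hNA, k, V, t, σ, hV, ht, halien, hfs, hvars, hQ⟩ := hgen
  constructor
  · -- P ⊨ Q → P ⊨ Q'
    intro hE I hI ρ A' hA'
    have hmem : A'.subst σ ∈ Q := by
      rw [hQ]; exact List.mem_map_of_mem (f := Atom.subst σ) hA'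
    have hJ := hE (Jint I ρ V t) (Jint_model I ρ V t Pg halien hI) Tm.var
      (A'.subst σ) hmem
    have h1 : ∀ u ∈ A'.args,
        hmap I ρ V t ((Jint I ρ V t).eval Tm.var (u.subst σ)) = I.eval ρ u := by
      intro u hu
      rw [Jint_eval, subst_var]
      exact hmap_subst_noalien I ρ V t (progSymbols Pg) σ hV ht halien hfs u
        (hNA A' hA' u hu)
    have : I.rel A'.pred
        (((A'.args.map (Tm.subst σ)).map ((Jint I ρ V t).eval Tm.var)).map
          (hmap I ρ V t)) := hJ
    erw [List.map_map, List.map_map] at this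
    have heq : A'.args.map ((hmap I ρ V t ∘ (Jint I ρ V t).eval Tm.var) ∘ Tm.subst σ) =
        A'.args.map (I.eval ρ) := by
      apply List.map_congr_left
      intro u hu
      exact h1 u hu
    rw [heq] at this
    exact this
  · -- P ⊨ Q' → P ⊨ Q
    intro hE I hI ρ A hA
    rw [hQ] at hA
    obtain ⟨A', hA', rfl⟩ := List.mem_map.mp hA
    have hJ := hE I hI (fun n => I.eval ρ (σ n)) A' hA'
    show I.rel A'.pred ((A'.args.map (Tm.subst σ)).map (I.eval ρ))
    rw [List.map_map]
    have heq : A'.args.map (I.eval ρ ∘ Tm.subst σ) =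
        A'.args.map (I.eval (fun n => I.eval ρ (σ n))) := by
      apply List.map_congr_left
      intro u _
      exact eval_subst I ρ σ u
    rw [heq]
    exact hJ
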